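/- If each of n ≥ 2 nodes independently becomes a candidate with probability (12 ln n)/n and independently picks a uniform rank in {1, …, n⁴}, then with probability at least 1 − 1/n², simultaneously: at least one node is a candidate, at most 24 ln n nodes are candidates, and all n ranks are distinct. -/

import Mathlib

open MeasureTheory ProbabilityTheory
open scoped Classical

/-!
Three bad events are bounded separately and combined by a union bound. With `p = 12 ln n / n`,
no node is a candidate with probability `(1 - p)^n ≤ e^{-np} = n^{-12}`. More than `24 ln n`
candidates is a Chernoff bound at `t = ln 2`: the candidate count has mgf at most
`e^{np(e^t - 1)} = n^{12}`, so the tail is at most `n^{12 - 24 ln 2}`. Two independent uniform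
ranks in `{1, …, n⁴}` collide with probability at most `n^{-4}`, and there are
`n.choose 2 ≤ n²/2` pairs of nodes.
-/

open Real Finset

lemma PMF.toMeasure_uniformOfFinset_singleton_le {α : Type*} [MeasurableSpace α]
    [MeasurableSingletonClass α] {s : Finset α} (hs : s.Nonempty) (a : α) :
    (PMF.uniformOfFinset s hs).toMeasure {a} ≤ (#s : ENNReal)⁻¹ := by
  rw [PMF.toMeasure_apply_singleton _ _ (measurableSet_singleton a), PMF.uniformOfFinset_apply]
  split_ifs <;> simp

lemma exp_neg_twelve_mul_log_le {x : ℝ} (hx : 2 ≤ x) : exp (-(12 * log x)) ≤ (4 * x ^ 2)⁻¹ := by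
  rw [exp_neg, show (12 : ℝ) * log x = ((12 : ℕ) : ℝ) * log x by norm_num, exp_nat_mul,
    exp_log (by linarith)]
  have h10 : (2 : ℝ) ^ 10 ≤ x ^ 10 := pow_le_pow_left₀ (by norm_num) hx 10
  gcongr
  nlinarith

lemma exp_chernoff_exponent_le {x : ℝ} (hx : 2 ≤ x) :
    exp (-log 2 * (24 * log x) + 12 * log x) ≤ (4 * x ^ 2)⁻¹ := by
  have hlogx : log 2 ≤ log x := log_le_log (by norm_num) hx
  have hlog4 : log 4 = 2 * log 2 := by
    rw [show (4 : ℝ) = 2 ^ 2 by norm_num, log_pow]; norm_num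
  rw [← exp_log (show 0 < (4 * x ^ 2)⁻¹ by positivity), exp_le_exp, log_inv,
    log_mul (by norm_num) (by positivity), log_pow, hlog4]
  have hlog2 : 0 < log 2 := log_pos one_lt_two
  have hcoeff : 2 ≤ 24 * log 2 - 14 := by linarith [log_two_gt_d9]
  have h1 := mul_le_mul_of_nonneg_right hcoeff hlog2.le
  have h2 := mul_le_mul_of_nonneg_left hlogx (by linarith : 0 ≤ 24 * log 2 - 14)
  push_cast
  linarith

lemma choose_two_div_pow_four_le {n : ℕ} (hn : 0 < n) :
    (n.choose 2 : ℝ) / n ^ 4 ≤ (2 * (n : ℝ) ^ 2)⁻¹ := by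
  have hn' : (1 : ℝ) ≤ n := by exact_mod_cast hn
  rw [Nat.cast_choose_two, div_le_iff₀ (by positivity)]
  field_simp
  nlinarith

lemma Real.exp_mul_indicator_one {α : Type*} (s : Set α) (t : ℝ) :
    (fun x => exp (t * s.indicator 1 x)) = fun x => 1 + (exp t - 1) * s.indicator 1 x := by
  funext x
  by_cases h : x ∈ s <;> simp [h]

namespace ProbabilityTheory

variable {Ω : Type*} [MeasurableSpace Ω] {μ : Measure Ω}

lemma integrable_exp_mul_indicator_one [IsFiniteMeasure μ] {s : Set Ω} (hs : MeasurableSet s)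
    (t : ℝ) : Integrable (fun ω => exp (t * s.indicator 1 ω)) μ := by
  rw [exp_mul_indicator_one]
  exact (integrable_const 1).add (((integrable_const (1 : ℝ)).indicator hs).const_mul _)

variable [IsProbabilityMeasure μ]

lemma mgf_indicator_one {s : Set Ω} (hs : MeasurableSet s) (t : ℝ) :
    mgf (s.indicator 1) μ t = 1 + μ.real s * (exp t - 1) := by
  have hint : Integrable (s.indicator (1 : Ω → ℝ)) μ := (integrable_const (1 : ℝ)).indicator hs
  rw [mgf, exp_mul_indicator_one, integral_add (integrable_const 1) (hint.const_mul _),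
    integral_const_mul, integral_indicator_one hs]
  simp [mul_comm]

lemma ofReal_one_sub_le_of_measure_compl_le {s : Set Ω} {ε : ℝ}
    (hε : 0 ≤ ε) (hs : μ sᶜ ≤ ENNReal.ofReal ε) : ENNReal.ofReal (1 - ε) ≤ μ s := by
  rw [ENNReal.ofReal_sub _ hε, ENNReal.ofReal_one, tsub_le_iff_right]
  calc 1 = μ Set.univ := measure_univ.symm
    _ ≤ μ s + μ sᶜ := measure_univ_le_add_compl s
    _ ≤ μ s + ENNReal.ofReal ε := by gcongr

lemma ofReal_one_sub_le_measure_and₃ {P Q R : Ω → Prop} {a b c ε : ℝ} (ha : 0 ≤ a) (hb : 0 ≤ b)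
    (hc : 0 ≤ c) (hε : a + b + c ≤ ε) (hP : μ {ω | ¬ P ω} ≤ ENNReal.ofReal a)
    (hQ : μ {ω | ¬ Q ω} ≤ ENNReal.ofReal b) (hR : μ {ω | ¬ R ω} ≤ ENNReal.ofReal c) :
    ENNReal.ofReal (1 - ε) ≤ μ {ω | P ω ∧ Q ω ∧ R ω} := by
  have hcompl : {ω | P ω ∧ Q ω ∧ R ω}ᶜ = {ω | ¬ P ω} ∪ {ω | ¬ Q ω} ∪ {ω | ¬ R ω} := by
    ext ω; simp only [Set.mem_compl_iff, Set.mem_union, Set.mem_ofPred_eq]; tauto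
  refine (ENNReal.ofReal_le_ofReal (by linarith)).trans
    (ofReal_one_sub_le_of_measure_compl_le (ε := a + b + c) (by positivity) ?_)
  rw [hcompl, ENNReal.ofReal_add (by positivity) hc, ENNReal.ofReal_add ha hb]
  exact (measure_union_le _ _).trans
    (add_le_add ((measure_union_le _ _).trans (add_le_add hP hQ)) hR)

section Bernoulli

variable {ι : Type*} [Fintype ι] {B : ι → Ω → Bool} {p : ℝ}

lemma measure_forall_eq_false_le (hB : iIndepFun B μ) (hBm : ∀ i, Measurable (B i))
    (hp0 : 0 ≤ p) (hp : ∀ i, μ {ω | B i ω = true} = ENNReal.ofReal p) :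
    μ {ω | ∀ i, B i ω = false} ≤ ENNReal.ofReal (exp (-(Fintype.card ι * p))) := by
  have hfalse : ∀ i, μ (B i ⁻¹' {false}) ≤ ENNReal.ofReal (exp (-p)) := fun i => calc
    μ (B i ⁻¹' {false}) = μ {ω | B i ω = true}ᶜ := by congr 1; ext ω; simp
    _ = ENNReal.ofReal (1 - p) := by
        rw [prob_compl_eq_one_sub (s := {ω | B i ω = true})
          (hBm i (measurableSet_singleton true)), hp, ← ENNReal.ofReal_one,
          ENNReal.ofReal_sub _ hp0]
    _ ≤ ENNReal.ofReal (exp (-p)) :=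
        ENNReal.ofReal_le_ofReal (by linarith [add_one_le_exp (-p)])
  calc μ {ω | ∀ i, B i ω = false} = ∏ i, μ (B i ⁻¹' {false}) := by
        rw [← hB.measure_inter_preimage_eq_mul univ fun i _ => measurableSet_singleton false]
        congr 1; ext ω; simp
    _ ≤ ∏ _i : ι, ENNReal.ofReal (exp (-p)) := Finset.prod_le_prod' fun i _ => hfalse i
    _ = ENNReal.ofReal (exp (-(Fintype.card ι * p))) := by
        rw [Finset.prod_const, ← ENNReal.ofReal_pow (exp_pos _).le, ← exp_nat_mul, card_univ]
        ring_nf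

lemma measure_le_card_filter_le (hB : iIndepFun B μ) (hBm : ∀ i, Measurable (B i))
    (hp0 : 0 ≤ p) (hp : ∀ i, μ {ω | B i ω = true} = ENNReal.ofReal p) (a : ℝ) {t : ℝ}
    (ht : 0 ≤ t) :
    μ {ω | a ≤ #{i | B i ω = true}} ≤
      ENNReal.ofReal (exp (-t * a + Fintype.card ι * p * (exp t - 1))) := by
  set S : ι → Set Ω := fun i => {ω | B i ω = true}
  have hS : ∀ i, MeasurableSet (S i) := fun i => hBm i (measurableSet_singleton true)
  set Z : ι → Ω → ℝ := fun i => (S i).indicator 1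
  have hZm : ∀ i, Measurable (Z i) := fun i => measurable_const.indicator (hS i)
  have hZ : iIndepFun Z μ := by
    convert hB.comp (fun _ (b : Bool) => if b = true then (1 : ℝ) else 0)
      (fun _ => measurable_of_countable _) using 1
    ext i ω
    simp [Z, S, Set.indicator_apply]
  have hcount : ∀ ω, (#{i | B i ω = true} : ℝ) = (∑ i, Z i) ω := by
    intro ω
    simp only [Finset.natCast_card_filter, Finset.sum_apply, Z, S, Set.indicator_apply,
      Set.mem_ofPred_eq, Pi.one_apply]
  have hmgf : ∀ i, mgf (Z i) μ t ≤ exp (p * (exp t - 1)) := by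
    intro i
    rw [mgf_indicator_one (hS i), measureReal_def, hp, ENNReal.toReal_ofReal hp0]
    linarith [add_one_le_exp (p * (exp t - 1))]
  have hprod : ∏ i, mgf (Z i) μ t ≤ exp (Fintype.card ι * p * (exp t - 1)) := calc
    ∏ i, mgf (Z i) μ t ≤ ∏ _i : ι, exp (p * (exp t - 1)) :=
        Finset.prod_le_prod (fun i _ => mgf_nonneg) fun i _ => hmgf i
    _ = exp (Fintype.card ι * p * (exp t - 1)) := by
        rw [Finset.prod_const, ← exp_nat_mul, card_univ, mul_assoc]
  have hchernoff := measure_ge_le_exp_mul_mgf (X := ∑ i, Z i) (μ := μ) a ht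
    (hZ.integrable_exp_mul_sum hZm fun i _ => integrable_exp_mul_indicator_one (hS i) t)
  rw [hZ.mgf_sum hZm] at hchernoff
  rw [ENNReal.le_ofReal_iff_toReal_le (measure_ne_top _ _) (exp_pos _).le, exp_add]
  simp_rw [hcount]
  exact hchernoff.trans (mul_le_mul_of_nonneg_left hprod (exp_pos _).le)

end Bernoulli

section Collision

variable {α : Type*} [MeasurableSpace α] [MeasurableEq α]

lemma IndepFun.measure_eq_le {X Y : Ω → α} (hXY : IndepFun X Y μ) (hX : Measurable X)
    (hY : Measurable Y) {c : ENNReal} (hc : ∀ a, μ.map X {a} ≤ c) :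
    μ {ω | X ω = Y ω} ≤ c := by
  have hdiag : MeasurableSet (Set.diagonal α) := measurableSet_diagonal
  calc μ {ω | X ω = Y ω} = μ.map (fun ω => (X ω, Y ω)) (Set.diagonal α) := by
        rw [Measure.map_apply (hX.prodMk hY) hdiag]; rfl
    _ = ∫⁻ a, μ.map X {a} ∂(μ.map Y) := by
        rw [(indepFun_iff_map_prod_eq_prod_map_map hX.aemeasurable hY.aemeasurable).1 hXY,
          Measure.prod_apply_symm hdiag]
        rfl
    _ ≤ ∫⁻ _, c ∂(μ.map Y) := lintegral_mono hc
    _ = c := by simp [Measure.map_apply hY MeasurableSet.univ]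

lemma measure_not_injective_le {ι : Type*} [Fintype ι] [LinearOrder ι] {X : ι → Ω → α}
    (hX : Pairwise fun i j => IndepFun (X i) (X j) μ) (hXm : ∀ i, Measurable (X i))
    {c : ENNReal} (hc : ∀ i a, μ.map (X i) {a} ≤ c) :
    μ {ω | ¬ Function.Injective (X · ω)} ≤ (Fintype.card ι).choose 2 * c := by
  set pairs : Finset (ι × ι) := {q | q.1 < q.2}
  have hsub : {ω | ¬ Function.Injective (X · ω)} ⊆ ⋃ q ∈ pairs, {ω | X q.1 ω = X q.2 ω} := by
    intro ω hω
    simp only [Function.Injective, Set.mem_ofPred_eq, not_forall] at hω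
    obtain ⟨i, j, hij, hne⟩ := hω
    simp only [Set.mem_iUnion, Set.mem_ofPred_eq, pairs, Finset.mem_filter, Finset.mem_univ,
      true_and]
    rcases lt_or_gt_of_ne hne with h | h
    · exact ⟨(i, j), h, hij⟩
    · exact ⟨(j, i), h, hij.symm⟩
  calc μ {ω | ¬ Function.Injective (X · ω)}
      ≤ ∑ q ∈ pairs, μ {ω | X q.1 ω = X q.2 ω} :=
        (measure_mono hsub).trans (measure_biUnion_finset_le _ _)
    _ ≤ ∑ _q ∈ pairs, c := by
        refine Finset.sum_le_sum fun q hq => ?_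
        have hlt : q.1 < q.2 := by simpa [pairs] using hq
        exact (hX hlt.ne).measure_eq_le (hXm _) (hXm _) (hc _)
    _ = (Fintype.card ι).choose 2 * c := by
        rw [Finset.sum_const, Fintype.card_product_filter_lt, nsmul_eq_mul]

end Collision

variable {n : ℕ} {B : Fin n → Ω → Bool}

lemma measure_not_exists_eq_true_le (hn : 2 ≤ n) (hB : iIndepFun B μ)
    (hBm : ∀ i, Measurable (B i))
    (hp : ∀ i, μ {ω | B i ω = true} = ENNReal.ofReal (12 * log n / n)) :
    μ {ω | ¬ ∃ i, B i ω = true} ≤ ENNReal.ofReal (4 * (n : ℝ) ^ 2)⁻¹ := by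
  have hn2 : (2 : ℝ) ≤ n := by exact_mod_cast hn
  refine (measure_mono fun ω hω => by simpa using hω).trans
    ((measure_forall_eq_false_le hB hBm (by positivity) hp).trans (ENNReal.ofReal_le_ofReal ?_))
  rw [Fintype.card_fin, mul_div_cancel₀ _ (by positivity)]
  exact exp_neg_twelve_mul_log_le hn2

lemma measure_not_card_filter_le_le (hn : 2 ≤ n) (hB : iIndepFun B μ)
    (hBm : ∀ i, Measurable (B i))
    (hp : ∀ i, μ {ω | B i ω = true} = ENNReal.ofReal (12 * log n / n)) :
    μ {ω | ¬ (#{i | B i ω = true} : ℝ) ≤ 24 * log n} ≤ ENNReal.ofReal (4 * (n : ℝ) ^ 2)⁻¹ := by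
  have hn2 : (2 : ℝ) ≤ n := by exact_mod_cast hn
  refine (measure_mono fun ω hω => le_of_lt (not_le.1 hω)).trans
    ((measure_le_card_filter_le hB hBm (by positivity) hp _ (log_nonneg one_le_two)).trans
      (ENNReal.ofReal_le_ofReal ?_))
  rw [Fintype.card_fin, mul_div_cancel₀ _ (by positivity), exp_log two_pos,
    show (2 : ℝ) - 1 = 1 by norm_num, mul_one]
  exact exp_chernoff_exponent_le hn2

lemma measure_not_injective_le_of_uniform_Icc (hn : 0 < n) {R : Fin n → Ω → ℕ}
    (hR : Pairwise fun i j => IndepFun (R i) (R j) μ) (hRm : ∀ i, Measurable (R i))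
    (hs : (Icc 1 (n ^ 4)).Nonempty)
    (hlaw : ∀ i, μ.map (R i) = (PMF.uniformOfFinset (Icc 1 (n ^ 4)) hs).toMeasure) :
    μ {ω | ¬ Function.Injective (R · ω)} ≤ ENNReal.ofReal (2 * (n : ℝ) ^ 2)⁻¹ := by
  refine (measure_not_injective_le hR hRm fun i a => (hlaw i).symm ▸
    PMF.toMeasure_uniformOfFinset_singleton_le hs a).trans ?_
  calc ((Fintype.card (Fin n)).choose 2 : ENNReal) * (#(Icc 1 (n ^ 4)) : ENNReal)⁻¹
      = ENNReal.ofReal ((n.choose 2 : ℝ) / n ^ 4) := by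
        rw [Fintype.card_fin, Nat.card_Icc, Nat.add_sub_cancel,
          ENNReal.ofReal_div_of_pos (by positivity), div_eq_mul_inv]
        norm_cast
    _ ≤ ENNReal.ofReal (2 * (n : ℝ) ^ 2)⁻¹ :=
        ENNReal.ofReal_le_ofReal (choose_two_div_pow_four_le hn)

end ProbabilityTheory

/-- If each of `n ≥ 2` nodes independently becomes a candidate with probability
`(12 ln n)/n` and independently picks a uniform rank in `{1, …, n⁴}`, then with
probability at least `1 - 1/n²`: at least one node is a candidate, at most
`24 ln n` nodes are candidates, and all `n` ranks are distinct. -/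
theorem prob_good_candidates_and_ranks
    {Ω : Type*} [MeasureSpace Ω] [IsProbabilityMeasure (ℙ : Measure Ω)]
    (n : ℕ) (hn : 2 ≤ n)
    (X : Fin n → Ω → Bool × ℕ)
    (hmeas : ∀ i, Measurable (X i))
    (hind : iIndepFun X ℙ)
    (hcand : ∀ i, ℙ {ω | (X i ω).1 = true} = ENNReal.ofReal (12 * Real.log n / n))
    (hrank : ∀ i, Measure.map (fun ω => (X i ω).2) ℙ =
      (PMF.uniformOfFinset (Finset.Icc 1 (n ^ 4))
        (Finset.nonempty_Icc.mpr (Nat.one_le_pow 4 n (by omega)))).toMeasure) :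
    ENNReal.ofReal (1 - ((n : ℝ) ^ 2)⁻¹) ≤
      ℙ {ω | (∃ i, (X i ω).1 = true) ∧
          ((Finset.univ.filter (fun i => (X i ω).1 = true)).card : ℝ) ≤
            24 * Real.log n ∧
          Function.Injective (fun i => (X i ω).2)} := by
  have hcandm : ∀ i, Measurable fun ω => (X i ω).1 := fun i => measurable_fst.comp (hmeas i)
  have hcandi : iIndepFun (fun i ω => (X i ω).1) ℙ := hind.comp _ fun _ => measurable_fst
  refine ofReal_one_sub_le_measure_and₃ (by positivity) (by positivity) (by positivity) ?_
    (measure_not_exists_eq_true_le hn hcandi hcandm hcand)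
    (measure_not_card_filter_le_le hn hcandi hcandm hcand)
    (measure_not_injective_le_of_uniform_Icc (by omega)
      (fun i j hij => (hind.indepFun hij).comp measurable_snd measurable_snd)
      (fun i => measurable_snd.comp (hmeas i)) _ hrank)
  field_simp
  norm_num
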